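/- Let C = {(x₁, x₂) ∈ ℝ² : x₁ ≥ 0, x₂ ≥ 0}, f₁(x, y) = x₂y₁ − x₁y₂, f₂(x, y) = x₁y₂ − x₂y₁, α₁ = α₂ = 1/2, and let F : ℝ² → ℝ² be the constant (hence contractive) map F(x) = x¹ = (1, 1). Let {λ_k}, {μ_k}, {δ_k} ⊂ (0, 1) with λ_k + μ_k + δ_k = 1, and {ρ_k} ⊂ (0, 1). Let sequences {x^k}, {y^k} satisfy: x^1 = x¹; y^k ∈ C with (1/2) f₁(y^k, y) + (1/2) f₂(y^k, y) + (1/ρ_k)⟨y − y^k, y^k − x^k⟩ ≥ 0 for all y ∈ C; and x^{k+1} = λ_k F(x^k) + μ_k x^k + δ_k y^k (the scheme of Statement 2.4). Then x^k = y^k = (1, 1) for every k ≥ 1, so {x^k} converges to (1, 1), which does not belong to Ω = Sol(C, f₁) ∩ Sol(C, f₂) = {(0, 0)}. -/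

import Mathlib

open Filter Topology RealInnerProductSpace

/-- The plane `ℝ²` as a Euclidean space. -/
abbrev E2 : Type := EuclideanSpace ℝ (Fin 2)

/-- The nonnegative quadrant `C = {(x₁,x₂) ∈ ℝ² : x₁ ≥ 0, x₂ ≥ 0}`. -/
def Quad : Set E2 := {p | 0 ≤ p 0 ∧ 0 ≤ p 1}

/-- `f₁(x,y) = x₂y₁ − x₁y₂`. -/
def f1 (x y : E2) : ℝ := x 1 * y 0 - x 0 * y 1

/-- `f₂(x,y) = x₁y₂ − x₂y₁`. -/
def f2 (x y : E2) : ℝ := x 0 * y 1 - x 1 * y 0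

/-- Solution set of the equilibrium problem `EP(C, f)`. -/
def Sol (C : Set E2) (f : E2 → E2 → ℝ) : Set E2 :=
  {x ∈ C | ∀ y ∈ C, 0 ≤ f x y}

/-!
The combination `(1/2) f₁ + (1/2) f₂` vanishes identically, so the regularized subproblem of the
scheme only asks `⟪w - yᵏ, yᵏ - xᵏ⟫ ≥ 0` on `C`, i.e. `yᵏ` is the projection of `xᵏ` onto `C`.
Since `(1, 1) ∈ C` is also the value of `F`, the iteration never leaves `(1, 1)`. On the other hand
testing `f₁` against `(0, 1)` and `f₂` against `(1, 0)` shows that the common solutions are `0`.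
-/

lemma half_f1_add_half_f2 (x y : E2) : (1 / 2) * f1 x y + (1 / 2) * f2 x y = 0 := by
  simp only [f1, f2]
  ring

lemma eq_of_inner_sub_sub_nonneg {E : Type*} [NormedAddCommGroup E] [InnerProductSpace ℝ E]
    {x y : E} (h : 0 ≤ ⟪x - y, y - x⟫) : y = x := by
  rw [← neg_sub x y, inner_neg_right, neg_nonneg, real_inner_self_nonpos, sub_eq_zero] at h
  exact h.symm

lemma eq_of_regularized_step {ρ : ℝ} (hρ : 0 < ρ) {x y : E2} (hx : x ∈ Quad)
    (h : ∀ w ∈ Quad, 0 ≤ (1 / 2) * f1 y w + (1 / 2) * f2 y w + (1 / ρ) * ⟪w - y, y - x⟫) :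
    y = x := by
  have hxy := h x hx
  rw [half_f1_add_half_f2, zero_add] at hxy
  exact eq_of_inner_sub_sub_nonneg (nonneg_of_mul_nonneg_right hxy (one_div_pos.2 hρ))

lemma sol_quad_f1 : Sol Quad f1 = {p | p 0 = 0 ∧ 0 ≤ p 1} := by
  ext p
  simp only [Sol, Quad, f1, Set.mem_ofPred_eq]
  constructor
  · rintro ⟨⟨hp0, hp1⟩, hp⟩
    have h01 := hp !₂[0, 1] (by simp)
    simp only [Matrix.cons_val_zero, Matrix.cons_val_one] at h01
    exact ⟨le_antisymm (by linarith) hp0, hp1⟩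
  · rintro ⟨hp0, hp1⟩
    refine ⟨⟨hp0.ge, hp1⟩, fun w hw => ?_⟩
    rw [hp0, zero_mul, sub_zero]
    exact mul_nonneg hp1 hw.1

lemma sol_quad_f2 : Sol Quad f2 = {p | 0 ≤ p 0 ∧ p 1 = 0} := by
  ext p
  simp only [Sol, Quad, f2, Set.mem_ofPred_eq]
  constructor
  · rintro ⟨⟨hp0, hp1⟩, hp⟩
    have h10 := hp !₂[1, 0] (by simp)
    simp only [Matrix.cons_val_zero, Matrix.cons_val_one] at h10
    exact ⟨hp0, le_antisymm (by linarith) hp1⟩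
  · rintro ⟨hp0, hp1⟩
    refine ⟨⟨hp0, hp1.ge⟩, fun w hw => ?_⟩
    rw [hp1, zero_mul, sub_zero]
    exact mul_nonneg hp0 hw.2

lemma sol_quad_f1_inter_sol_quad_f2 : Sol Quad f1 ∩ Sol Quad f2 = {(!₂[0, 0] : E2)} := by
  ext p
  simp only [sol_quad_f1, sol_quad_f2, Set.mem_inter_iff, Set.mem_ofPred_eq,
    Set.mem_singleton_iff]
  constructor
  · rintro ⟨⟨hp0, -⟩, -, hp1⟩
    ext i
    fin_cases i <;> simp [hp0, hp1]
  · rintro rfl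
    simp

theorem statement_2_4_counterexample_general
    (F : E2 → E2) (hF : ∀ p, F p = (!₂[1, 1] : E2))
    (lam mu delta ρ : ℕ → ℝ)
    (hsum : ∀ k, lam k + mu k + delta k = 1)
    (hρ : ∀ k, ρ k ∈ Set.Ioo (0 : ℝ) 1)
    (x y : ℕ → E2)
    (hx1 : x 1 = !₂[1, 1])
    (hy : ∀ k ≥ 1, y k ∈ Quad ∧ ∀ w ∈ Quad,
      0 ≤ (1 / 2) * f1 (y k) w + (1 / 2) * f2 (y k) w +
        (1 / ρ k) * ⟪w - y k, y k - x k⟫)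
    (hxk : ∀ k ≥ 1, x (k + 1) = lam k • F (x k) + mu k • x k + delta k • y k) :
    (∀ k ≥ 1, x k = (!₂[1, 1] : E2) ∧ y k = (!₂[1, 1] : E2)) ∧
    Filter.Tendsto x Filter.atTop (𝓝 (!₂[1, 1] : E2)) ∧
    Sol Quad f1 ∩ Sol Quad f2 = {(!₂[0, 0] : E2)} ∧
    (!₂[1, 1] : E2) ∉ Sol Quad f1 ∩ Sol Quad f2 := by
  have hy_of_hx : ∀ k ≥ 1, x k = !₂[1, 1] → y k = !₂[1, 1] := fun k hk hxk1 =>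
    hxk1 ▸ eq_of_regularized_step (hρ k).1 (hxk1 ▸ by simp [Quad]) (hy k hk).2
  have hx : ∀ k ≥ 1, x k = !₂[1, 1] := by
    refine Nat.le_induction hx1 fun k hk hxk1 => ?_
    rw [hxk k hk, hF, hxk1, hy_of_hx k hk hxk1, ← add_smul, ← add_smul, hsum, one_smul]
  refine ⟨fun k hk => ⟨hx k hk, hy_of_hx k hk (hx k hk)⟩, ?_, sol_quad_f1_inter_sol_quad_f2, ?_⟩
  · exact tendsto_const_nhds.congr' (eventually_atTop.2 ⟨1, fun k hk => (hx k hk).symm⟩)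
  · rw [sol_quad_f1_inter_sol_quad_f2, Set.mem_singleton_iff]
    intro h
    simpa using congrArg (fun p : E2 => p 0) h

/-- the scheme of Statement 2.4 with the constant (hence
contractive) map `F ≡ (1,1)` applied to the combination `(1/2)f₁ + (1/2)f₂`
stays at `(1,1)` forever, hence converges to
`(1,1) ∉ Ω = Sol(C,f₁) ∩ Sol(C,f₂) = {(0,0)}`. -/
theorem statement_2_4_counterexample
    (F : E2 → E2) (hF : ∀ p, F p = (!₂[1, 1] : E2))
    (lam mu delta ρ : ℕ → ℝ)
    (hlam : ∀ k, lam k ∈ Set.Ioo (0 : ℝ) 1)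
    (hmu : ∀ k, mu k ∈ Set.Ioo (0 : ℝ) 1)
    (hdelta : ∀ k, delta k ∈ Set.Ioo (0 : ℝ) 1)
    (hsum : ∀ k, lam k + mu k + delta k = 1)
    (hρ : ∀ k, ρ k ∈ Set.Ioo (0 : ℝ) 1)
    (x y : ℕ → E2)
    (hx1 : x 1 = !₂[1, 1])
    (hy : ∀ k ≥ 1, y k ∈ Quad ∧ ∀ w ∈ Quad,
      0 ≤ (1 / 2) * f1 (y k) w + (1 / 2) * f2 (y k) w +
        (1 / ρ k) * ⟪w - y k, y k - x k⟫)
    (hxk : ∀ k ≥ 1, x (k + 1) = lam k • F (x k) + mu k • x k + delta k • y k) :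
    (∀ k ≥ 1, x k = (!₂[1, 1] : E2) ∧ y k = (!₂[1, 1] : E2)) ∧
    Filter.Tendsto x Filter.atTop (𝓝 (!₂[1, 1] : E2)) ∧
    Sol Quad f1 ∩ Sol Quad f2 = {(!₂[0, 0] : E2)} ∧
    (!₂[1, 1] : E2) ∉ Sol Quad f1 ∩ Sol Quad f2 :=
  statement_2_4_counterexample_general F hF lam mu delta ρ hsum hρ x y hx1 hy hxk
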